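/- Let G be an r-regular simple graph with n vertices and m edges, where r ≥ 2 (so that m ≥ n), and let q_1 ≤ q_2 ≤ … ≤ q_n = 2r be the eigenvalues of Q(G) listed with multiplicity. Then f(λ, G^{0++}) = [(λ-r)(λ-4r+2) - 2r]·(λ-2r+2)^{m-n}·∏_{i=1}^{n-1}[(λ-r)(λ-2r+2-q_i) - q_i]. -/

import Mathlib

open Classical

/-- The four symbols `0, 1, +, -` used in `xyz`-transformations. -/
inductive XYZ : Type
  | zero | one | plus | minus

namespace XYZ

/-- The relation on the vertices of a graph `H` given by a symbol:
`0` gives the empty graph, `1` the complete graph, `+` the graph itself,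
`-` its complement. -/
def rel {W : Type*} (H : SimpleGraph W) : XYZ → W → W → Prop
  | .zero => fun _ _ => False
  | .one  => fun u v => u ≠ v
  | .plus => fun u v => H.Adj u v
  | .minus => fun u v => u ≠ v ∧ ¬ H.Adj u v

/-- The incidence relation between a vertex and an edge given by a symbol `z`:
`+` means incident, `-` means non-incident, `0` never, `1` always. -/
def inc {W : Type*} (G : SimpleGraph W) : XYZ → W → G.edgeSet → Prop
  | .zero => fun _ _ => False
  | .one  => fun _ _ => True
  | .plus => fun v e => v ∈ (e : Sym2 W)
  | .minus => fun v e => v ∉ (e : Sym2 W)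

theorem rel_symm {W : Type*} (H : SimpleGraph W) (x : XYZ) {u v : W}
    (h : rel H x u v) : rel H x v u := by
  cases x with
  | zero => exact h.elim
  | one => exact (h : u ≠ v).symm
  | plus => exact H.adj_symm h
  | minus => exact ⟨(h.1).symm, fun h' => h.2 (H.adj_symm h')⟩

theorem rel_irrefl {W : Type*} (H : SimpleGraph W) (x : XYZ) {u : W}
    (h : rel H x u u) : False := by
  cases x with
  | zero => exact h
  | one => exact h rfl
  | plus => exact H.irrefl h
  | minus => exact h.1 rfl

end XYZ

/-- The `xyz`-transformation `G^{xyz}` of a graph `G`: its vertex set is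
`V(G) ⊕ E(G)`; two vertices of `G` are adjacent according to the symbol `x`
(applied to `G`), two edges according to the symbol `y` (applied to the line
graph of `G`), and a vertex and an edge according to the symbol `z`
(`+` = incidence graph `B(G)`, `-` = non-incidence graph `B^c(G)`,
`0` = no vertex-edge edges, `1` = all vertex-edge edges). -/
def xyzTransform {V : Type*} (G : SimpleGraph V) (x y z : XYZ) :
    SimpleGraph (V ⊕ G.edgeSet) where
  Adj a b :=
    match a, b with
    | Sum.inl u, Sum.inl v => XYZ.rel G x u v
    | Sum.inr e, Sum.inr f => XYZ.rel G.lineGraph y e f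
    | Sum.inl v, Sum.inr e => XYZ.inc G z v e
    | Sum.inr e, Sum.inl v => XYZ.inc G z v e
  symm := by
    constructor
    rintro (u | e) (v | f) h
    · exact XYZ.rel_symm G x h
    · exact h
    · exact h
    · exact XYZ.rel_symm G.lineGraph y h
  loopless := by
    constructor
    rintro (u | e) h
    · exact XYZ.rel_irrefl G x h
    · exact XYZ.rel_irrefl G.lineGraph y h

/-- The signless Laplacian matrix `Q(G) = D(G) + A(G)` of a graph. -/
noncomputable def signlessLaplacian {V : Type*} [Fintype V] (G : SimpleGraph V) :
    Matrix V V ℝ :=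
  Matrix.of fun u v =>
    (if u = v then (G.degree u : ℝ) else 0) + (if G.Adj u v then 1 else 0)

/-- The signless Laplacian characteristic polynomial
`f(λ, G) = det (λ I - Q(G))`, evaluated at a real number `λ`. -/
noncomputable def fQ {V : Type*} [Fintype V] (G : SimpleGraph V) (lam : ℝ) : ℝ :=
  Matrix.det (lam • (1 : Matrix V V ℝ) - signlessLaplacian G)


/-!
Write `B` for the vertex-edge incidence matrix of `G`. Then `B Bᵀ = Q(G)` and
`Bᵀ B = 2 I + A(L(G))`, so for `r`-regular `G`
`Q(G^{0++}) = [[r I, B], [Bᵀ, (2r - 2) I + Bᵀ B]]`.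
Subtracting `Bᵀ` times the first block row from the second turns `λ I - Q(G^{0++})` into
`[[(λ - r) I, -B], [-(λ - r + 1) Bᵀ, (λ - 2r + 2) I]]`, whose determinant is
`(λ - 2r + 2)^(m - n) det((λ - r)(λ - 2r + 2) I - (λ - r + 1) Q(G))`
(a Schur complement when `λ - 2r + 2` is a non-zero-divisor, hence in general by
passing to `R[X]`). This factors over the eigenvalues `q_i` of `Q(G)`, and `q_n = 2r`
gives the first factor.
-/

open Matrix

namespace Matrix

variable {m n R : Type*} [Fintype m] [Fintype n] [DecidableEq m] [DecidableEq n] [CommRing R]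

theorem det_fromBlocks_smul_one_of_isRegular (a : R) {c : R} (hc : IsRegular c)
    (B : Matrix m n R) (C : Matrix n m R) (h : Fintype.card m ≤ Fintype.card n) :
    det (fromBlocks (a • 1) B C (c • 1)) =
      c ^ (Fintype.card n - Fintype.card m) * det ((a * c) • 1 - B * C) := by
  have hmul : fromBlocks (a • 1) B C (c • 1) * fromBlocks (c • 1) 0 (-C) 1 =
      fromBlocks ((a * c) • 1 - B * C) B 0 (c • 1) := by
    rw [fromBlocks_multiply]
    congr 1 <;> simp [smul_smul, sub_eq_add_neg, smul_comm c]
  have hdet := congrArg det hmul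
  simp only [det_mul, det_fromBlocks_zero₁₂, det_fromBlocks_zero₂₁, det_smul, det_one,
    mul_one] at hdet
  refine (hc.pow (Fintype.card m)).right ?_
  beta_reduce
  rw [hdet, mul_comm, mul_assoc, mul_comm (det _), ← mul_assoc, ← pow_add,
    Nat.sub_add_cancel h]

open Polynomial in
theorem det_fromBlocks_smul_one (a c : R) (B : Matrix m n R) (C : Matrix n m R)
    (h : Fintype.card m ≤ Fintype.card n) :
    det (fromBlocks (a • 1) B C (c • 1)) =
      c ^ (Fintype.card n - Fintype.card m) * det ((a * c) • 1 - B * C) := by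
  have hX := congrArg (evalRingHom c) <| det_fromBlocks_smul_one_of_isRegular
    (Polynomial.C a) isRegular_X (B.map Polynomial.C) (C.map Polynomial.C) h
  simp only [map_mul, map_pow, coe_evalRingHom, eval_X, RingHom.map_det] at hX
  convert hX using 3
  · ext (i | i) (j | j) <;> simp [one_apply, apply_ite (eval c)]
  · ext i j
    simp [one_apply, apply_ite (eval c), ← Matrix.map_mul]

theorem det_fromBlocks_smul_one_neg_neg_transpose (a c : R) (B : Matrix m n R)
    (h : Fintype.card m ≤ Fintype.card n) :
    det (fromBlocks (a • 1) (-B) (-Bᵀ) (c • 1 - Bᵀ * B)) =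
      c ^ (Fintype.card n - Fintype.card m) * det ((a * c) • 1 - (a + 1) • (B * Bᵀ)) := by
  have hrow : fromBlocks 1 0 (-Bᵀ) 1 * fromBlocks (a • 1) (-B) (-Bᵀ) (c • 1 - Bᵀ * B) =
      fromBlocks (a • 1) (-B) (-((a + 1) • Bᵀ)) (c • 1) := by
    rw [fromBlocks_multiply]
    congr 1 <;> simp [add_smul, add_comm]
  have hdet := congrArg det hrow
  rw [det_mul, det_fromBlocks_zero₁₂, det_one, det_one, one_mul, one_mul] at hdet
  rw [hdet, det_fromBlocks_smul_one _ _ _ _ h, Matrix.neg_mul, Matrix.mul_neg, neg_neg,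
    Matrix.mul_smul]

theorem det_smul_one_sub_smul {K ι : Type*} [Field K] [Fintype ι] {M : Matrix m m K}
    {q : ι → K} (hι : Fintype.card ι = Fintype.card m)
    (hq : ∀ x : K, det (x • 1 - M) = ∏ i, (x - q i)) (s k : K) :
    det (s • 1 - k • M) = ∏ i, (s - k * q i) := by
  rcases eq_or_ne k 0 with rfl | hk
  · simp [hι]
  calc det (s • 1 - k • M) = det (k • ((s / k) • 1 - M)) := by
        rw [smul_sub, smul_smul, mul_div_cancel₀ s hk]
    _ = ∏ i, (s - k * q i) := by
        rw [det_smul, hq, ← hι, ← Finset.card_univ, ← Finset.prod_const,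
          ← Finset.prod_mul_distrib]
        refine Finset.prod_congr rfl fun i _ => ?_
        rw [mul_sub, mul_div_cancel₀ s hk]

end Matrix

theorem Fin.prod_univ_eq_prod_castLE_mul_last {M : Type*} [CommMonoid M] {n : ℕ} (hn : 0 < n)
    (f : Fin n → M) :
    ∏ i, f i = (∏ i : Fin (n - 1), f (Fin.castLE (Nat.sub_le n 1) i)) * f ⟨n - 1, by omega⟩ := by
  obtain ⟨k, rfl⟩ : ∃ k, n = k + 1 := ⟨n - 1, by omega⟩
  exact Fin.prod_univ_castSucc f

namespace SimpleGraph

variable (R : Type*) {V : Type*} (G : SimpleGraph V)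

noncomputable def edgeIncMatrix [Zero R] [One R] : Matrix V G.edgeSet R :=
  (G.incMatrix R).submatrix id (↑)

variable {R}

theorem edgeIncMatrix_apply [Zero R] [One R] (v : V) (e : G.edgeSet) :
    G.edgeIncMatrix R v e = if v ∈ (e : Sym2 V) then 1 else 0 := by
  simp [edgeIncMatrix, incMatrix_apply', incidenceSet, e.2]

theorem eq_of_mem_of_mem_of_ne {e f : G.edgeSet} (hef : e ≠ f) {u w : V}
    (hu : u ∈ (e : Sym2 V) ∧ u ∈ (f : Sym2 V)) (hw : w ∈ (e : Sym2 V) ∧ w ∈ (f : Sym2 V)) :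
    u = w := by
  by_contra huw
  refine hef (Subtype.ext ?_)
  rw [(Sym2.mem_and_mem_iff huw).mp ⟨hu.1, hw.1⟩, (Sym2.mem_and_mem_iff huw).mp ⟨hu.2, hw.2⟩]

theorem adjMatrix_xyzTransform_zero_plus_plus [NonAssocSemiring R] :
    (xyzTransform G .zero .plus .plus).adjMatrix R =
      fromBlocks 0 (G.edgeIncMatrix R) (G.edgeIncMatrix R)ᵀ (G.lineGraph.adjMatrix R) := by
  ext (u | e) (v | f)
  · rw [adjMatrix_apply, fromBlocks_apply₁₁, Matrix.zero_apply]
    exact if_neg id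
  all_goals
    simp only [adjMatrix_apply, fromBlocks_apply₁₂, fromBlocks_apply₂₁, fromBlocks_apply₂₂,
      transpose_apply, edgeIncMatrix_apply]
    exact if_congr Iff.rfl rfl rfl

variable [Fintype V]

theorem sum_edgeSet_eq_sum {M : Type*} [AddCommMonoid M] (f : Sym2 V → M)
    (hf : ∀ e ∉ G.edgeSet, f e = 0) : ∑ e : G.edgeSet, f e = ∑ e, f e := by
  rw [← Fintype.sum_subtype_add_sum_subtype (· ∈ G.edgeSet) f]
  simp [Fintype.sum_eq_zero _ fun e : {e // e ∉ G.edgeSet} => hf e e.2]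

theorem edgeIncMatrix_mulVec_one [NonAssocSemiring R] :
    G.edgeIncMatrix R *ᵥ 1 = fun v => (G.degree v : R) := by
  ext v
  simp only [mulVec, dotProduct, Pi.one_apply, mul_one, edgeIncMatrix, submatrix_apply, id]
  rw [sum_edgeSet_eq_sum G (G.incMatrix R v) fun e he =>
    G.incMatrix_of_notMem_incidenceSet fun h => he h.1, sum_incMatrix_apply]

theorem transpose_edgeIncMatrix_mulVec_one [NonAssocSemiring R] :
    (G.edgeIncMatrix R)ᵀ *ᵥ 1 = 2 := by
  ext e
  simpa [mulVec, dotProduct, edgeIncMatrix] using G.sum_incMatrix_apply_of_mem_edgeSet e.2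

theorem edgeIncMatrix_mul_transpose :
    G.edgeIncMatrix ℝ * (G.edgeIncMatrix ℝ)ᵀ = signlessLaplacian G := by
  ext u v
  have h := congrFun₂ (G.incMatrix_mul_transpose (R := ℝ)) u v
  simp only [mul_apply, transpose_apply, edgeIncMatrix, submatrix_apply, id] at h ⊢
  rw [sum_edgeSet_eq_sum G (fun e => G.incMatrix ℝ u e * G.incMatrix ℝ v e) fun e he => by
    rw [G.incMatrix_of_notMem_incidenceSet fun h => he h.1, zero_mul], h]
  by_cases huv : u = v
  · subst huv; simp [signlessLaplacian]
  · simp [signlessLaplacian, huv]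

theorem transpose_mul_edgeIncMatrix [NonAssocSemiring R] :
    (G.edgeIncMatrix R)ᵀ * G.edgeIncMatrix R = (2 : R) • 1 + G.lineGraph.adjMatrix R := by
  ext e f
  by_cases hef : e = f
  · subst hef
    have h := G.incMatrix_transpose_mul_diag (R := R) (e := e)
    simp only [mul_apply] at h ⊢
    simpa [e.2, edgeIncMatrix] using h
  simp only [mul_apply, transpose_apply, edgeIncMatrix_apply, ite_zero_mul_ite_zero, mul_one,
    Finset.sum_boole, Matrix.add_apply, Matrix.smul_apply, one_apply_ne hef, smul_zero, zero_add,
    adjMatrix_apply]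
  split_ifs with hadj
  · obtain ⟨-, u, hu⟩ := lineGraph_adj_iff_exists.mp hadj
    rw [Finset.card_eq_one.mpr ⟨u, Finset.eq_singleton_iff_unique_mem.mpr
      ⟨by simpa using hu, fun w hw => eq_of_mem_of_mem_of_ne G hef (by simpa using hw) hu⟩⟩,
      Nat.cast_one]
  · rw [Finset.card_eq_zero.mpr, Nat.cast_zero]
    exact Finset.filter_eq_empty_iff.mpr fun w _ hw =>
      hadj (lineGraph_adj_iff_exists.mpr ⟨hef, w, hw⟩)

theorem signlessLaplacian_eq_diagonal_add_adjMatrix [DecidableEq V] (H : SimpleGraph V) :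
    signlessLaplacian H = diagonal (H.adjMatrix ℝ *ᵥ 1) + H.adjMatrix ℝ := by
  ext u v
  by_cases huv : u = v
  · subst huv; simp [signlessLaplacian]
  · simp [signlessLaplacian, huv]

theorem adjMatrix_xyzTransform_zero_plus_plus_mulVec_one {r : ℕ}
    (hreg : G.IsRegularOfDegree r) :
    (xyzTransform G .zero .plus .plus).adjMatrix ℝ *ᵥ 1 =
      Sum.elim (fun _ => (r : ℝ)) (fun _ => 2 * r) := by
  have hB : G.edgeIncMatrix ℝ *ᵥ 1 = (r : ℝ) • 1 := by
    rw [edgeIncMatrix_mulVec_one]; ext v; simp [hreg v]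
  have hL : G.lineGraph.adjMatrix ℝ =
      (G.edgeIncMatrix ℝ)ᵀ * G.edgeIncMatrix ℝ - (2 : ℝ) • 1 := by
    rw [transpose_mul_edgeIncMatrix, add_sub_cancel_left]
  rw [adjMatrix_xyzTransform_zero_plus_plus, fromBlocks_mulVec, hL, sub_mulVec, ← mulVec_mulVec]
  ext (v | e)
  · simp [hB]
  · simp only [Pi.one_comp, zero_mulVec, hB, zero_add, transpose_edgeIncMatrix_mulVec_one,
      mulVec_smul, smul_mulVec, one_mulVec, Sum.elim_inr, Pi.add_apply, Pi.ofNat_apply,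
      Pi.sub_apply, Pi.smul_apply, smul_eq_mul, mul_one, add_sub_cancel]
    ring

theorem signlessLaplacian_xyzTransform_zero_plus_plus {r : ℕ} (hreg : G.IsRegularOfDegree r) :
    signlessLaplacian (xyzTransform G .zero .plus .plus) =
      fromBlocks ((r : ℝ) • 1) (G.edgeIncMatrix ℝ) (G.edgeIncMatrix ℝ)ᵀ
        ((2 * r - 2 : ℝ) • 1 + (G.edgeIncMatrix ℝ)ᵀ * G.edgeIncMatrix ℝ) := by
  rw [signlessLaplacian_eq_diagonal_add_adjMatrix,
    adjMatrix_xyzTransform_zero_plus_plus_mulVec_one G hreg, ← fromBlocks_diagonal,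
    adjMatrix_xyzTransform_zero_plus_plus, fromBlocks_add, transpose_mul_edgeIncMatrix]
  congr 1
  · ext u v; simp [diagonal, one_apply]
  · simp
  · simp
  · ext e f
    simp only [diagonal, Matrix.add_apply, of_apply, adjMatrix_apply, Matrix.smul_apply,
      one_apply, smul_eq_mul, mul_ite, mul_one, mul_zero]
    split_ifs <;> ring

variable {G} in
theorem IsRegularOfDegree.card_le_card_edgeSet {r : ℕ} (hreg : G.IsRegularOfDegree r)
    (hr : 2 ≤ r) : Fintype.card V ≤ Fintype.card G.edgeSet := by
  have h := G.sum_degrees_eq_twice_card_edges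
  simp only [hreg.degree_eq, Finset.sum_const, Finset.card_univ, smul_eq_mul,
    edgeFinset_card] at h
  nlinarith

theorem fQ_xyzTransform_zero_plus_plus {r : ℕ} (hreg : G.IsRegularOfDegree r)
    (hle : Fintype.card V ≤ Fintype.card G.edgeSet) (lam : ℝ) :
    fQ (xyzTransform G .zero .plus .plus) lam =
      (lam - 2 * r + 2) ^ (Fintype.card G.edgeSet - Fintype.card V) *
        det (((lam - r) * (lam - 2 * r + 2)) • 1 - (lam - r + 1) • signlessLaplacian G) := by
  calc fQ (xyzTransform G .zero .plus .plus) lam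
      = det (fromBlocks ((lam - r) • 1) (-G.edgeIncMatrix ℝ) (-(G.edgeIncMatrix ℝ)ᵀ)
          ((lam - 2 * r + 2) • 1 - (G.edgeIncMatrix ℝ)ᵀ * G.edgeIncMatrix ℝ)) := by
        rw [fQ, signlessLaplacian_xyzTransform_zero_plus_plus G hreg]
        congr 1
        ext (u | e) (v | f) <;>
          simp only [Matrix.sub_apply, Matrix.smul_apply, Matrix.add_apply, Matrix.neg_apply,
            one_apply, fromBlocks_apply₁₁, fromBlocks_apply₁₂, fromBlocks_apply₂₁,
            fromBlocks_apply₂₂, transpose_apply, Sum.inl.injEq, Sum.inr.injEq, reduceCtorEq,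
            ↓reduceIte, smul_eq_mul, mul_ite, mul_one, mul_zero, zero_sub] <;>
          split_ifs <;> ring
    _ = _ := by
        rw [det_fromBlocks_smul_one_neg_neg_transpose _ _ _ hle, edgeIncMatrix_mul_transpose]

end SimpleGraph

theorem signless_charpoly_xyz_zpp {V : Type*} [Fintype V] (G : SimpleGraph V) (r n m : ℕ)
    (hn : Fintype.card V = n) (hm : Fintype.card G.edgeSet = m)
    (hreg : G.IsRegularOfDegree r) (hr2 : 2 ≤ r) (hn0 : 0 < n)
    (q : Fin n → ℝ)
    (hlast : q ⟨n - 1, by omega⟩ = 2 * r)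
    (hq : ∀ x : ℝ, fQ G x = ∏ i : Fin n, (x - q i)) :
    ∀ lam : ℝ,
      fQ (xyzTransform G XYZ.zero XYZ.plus XYZ.plus) lam =
        ((lam - r) * (lam - 4 * r + 2) - 2 * r) * (lam - 2 * r + 2) ^ (m - n) *
          ∏ i : Fin (n - 1), ((lam - r) * (lam - 2 * r + 2 - (q (Fin.castLE (Nat.sub_le n 1) i))) - (q (Fin.castLE (Nat.sub_le n 1) i))) := by
  intro lam
  have hfactor : ∀ x : ℝ, (lam - r) * (lam - 2 * r + 2) - (lam - r + 1) * x =
      (lam - r) * (lam - 2 * r + 2 - x) - x := fun x => by ring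
  rw [G.fQ_xyzTransform_zero_plus_plus hreg (hreg.card_le_card_edgeSet hr2), hm, hn,
    det_smul_one_sub_smul (by rw [Fintype.card_fin, hn]) hq,
    Fin.prod_univ_eq_prod_castLE_mul_last hn0, hlast]
  simp only [hfactor]
  ring
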